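/- Let d ≥ 2 be a natural number such that −1 is not a square in ℤ/dℤ (there is no x ∈ ZMod d with x² = −1). Let a, b, c ∈ ℂ be algebraically independent over ℚ. Define the 4×8 complex matrices L_A with rows (a, b, 0, 0, 1, 0, 0, 0), (b, c, 0, 0, 0, d, 0, 0), (0, 0, d·a, b, 0, 0, d, 0), (0, 0, b, c/d, 0, 0, 0, 1) and L_dual with rows (d·a, b, 0, 0, d, 0, 0, 0), (b, c/d, 0, 0, 0, 1, 0, 0), (0, 0, a, b, 0, 0, 1, 0), (0, 0, b, c, 0, 0, 0, d). Then there does not exist a 4×4 complex matrix H that is Hermitian and positive definite such that the column lattice of H·L_A equals the column lattice of L_dual. -/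

import Mathlib

open Matrix
open scoped ComplexOrder

namespace Matrix
variable {α : Type*} {m : ℕ}
@[simp] lemma cons_val_five (x : α) (u : Fin m.succ.succ.succ.succ.succ → α) :
    vecCons x u 5 = vecHead (vecTail (vecTail (vecTail (vecTail u)))) := rfl
@[simp] lemma cons_val_six (x : α) (u : Fin m.succ.succ.succ.succ.succ.succ → α) :
    vecCons x u 6 = vecHead (vecTail (vecTail (vecTail (vecTail (vecTail u))))) := rfl
@[simp] lemma cons_val_seven (x : α) (u : Fin m.succ.succ.succ.succ.succ.succ.succ → α) :
    vecCons x u 7 = vecHead (vecTail (vecTail (vecTail (vecTail (vecTail (vecTail u)))))) := rfl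
@[simp] lemma cons_val_eight (x : α) (u : Fin m.succ.succ.succ.succ.succ.succ.succ.succ → α) :
    vecCons x u 8 = vecHead (vecTail (vecTail (vecTail (vecTail (vecTail (vecTail (vecTail u))))))) := rfl
@[simp] lemma cons_val_nine (x : α) (u : Fin m.succ.succ.succ.succ.succ.succ.succ.succ.succ → α) :
    vecCons x u 9 = vecHead (vecTail (vecTail (vecTail (vecTail (vecTail (vecTail (vecTail (vecTail u)))))))) := rfl
end Matrix

lemma mono_indep {a b c : ℂ} (hind : AlgebraicIndependent ℚ ![a, b, c])
    (q : Fin 10 → ℚ)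
    (h : (q 0 : ℂ) + q 1 * a + q 2 * b + q 3 * c + q 4 * (a*a) + q 5 * (a*b)
        + q 6 * (a*c) + q 7 * (b*b) + q 8 * (b*c) + q 9 * (c*c) = 0) :
    ∀ i, q i = 0 := by
  open MvPolynomial in
  set p : MvPolynomial (Fin 3) ℚ :=
    C (q 0) + C (q 1) * X 0 + C (q 2) * X 1 + C (q 3) * X 2
    + C (q 4) * X 0 * X 0 + C (q 5) * X 0 * X 1 + C (q 6) * X 0 * X 2
    + C (q 7) * X 1 * X 1 + C (q 8) * X 1 * X 2 + C (q 9) * X 2 * X 2 with hpdef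
  have hp : (MvPolynomial.aeval ![a,b,c] : MvPolynomial (Fin 3) ℚ →ₐ[ℚ] ℂ) p = 0 := by
    open MvPolynomial in
    simp only [hpdef, map_add, _root_.map_mul, aeval_C, aeval_X,
      Matrix.cons_val_zero, Matrix.cons_val_one, Matrix.head_cons,
      Matrix.cons_val_two, Matrix.tail_cons, eq_ratCast]
    linear_combination h
  have hp0 : p = 0 := hind (by rw [hp, map_zero])
  have key : ∀ u v w : ℚ, q 0 + q 1*u + q 2*v + q 3*w + q 4*(u*u) + q 5*(u*v)
      + q 6*(u*w) + q 7*(v*v) + q 8*(v*w) + q 9*(w*w) = 0 := by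
    intro u v w
    have h2 := congrArg (MvPolynomial.eval ![u,v,w]) hp0
    open MvPolynomial in
    simp only [hpdef, map_add, _root_.map_mul, eval_C, eval_X, map_zero,
      Matrix.cons_val_zero, Matrix.cons_val_one, Matrix.head_cons,
      Matrix.cons_val_two, Matrix.tail_cons] at h2
    linarith [h2]
  have k000 := key 0 0 0
  have k100 := key 1 0 0
  have km100 := key (-1) 0 0
  have k010 := key 0 1 0
  have k0m10 := key 0 (-1) 0
  have k001 := key 0 0 1
  have k00m1 := key 0 0 (-1)
  have k110 := key 1 1 0
  have k101 := key 1 0 1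
  have k011 := key 0 1 1
  intro i
  fin_cases i <;> simp <;> linarith

/-- The column lattice of a 4×8 complex matrix: the ℤ-submodule of ℂ⁴ spanned by
the set of its 8 columns. -/
noncomputable def colLattice (M : Matrix (Fin 4) (Fin 8) ℂ) : Submodule ℤ (Fin 4 → ℂ) :=
  Submodule.span ℤ (Set.range Mᵀ)

/-- The period matrix of `A = S × Ŝ` for a `(1,d)`-polarised surface `S`. -/
noncomputable def LA (d : ℕ) (a b c : ℂ) : Matrix (Fin 4) (Fin 8) ℂ :=
  !![a, b, 0, 0, 1, 0, 0, 0;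
     b, c, 0, 0, 0, (d : ℂ), 0, 0;
     0, 0, (d : ℂ) * a, b, 0, 0, (d : ℂ), 0;
     0, 0, b, c / (d : ℂ), 0, 0, 0, 1]

/-- The period matrix of the dual `Â = Ŝ × S`. -/
noncomputable def Ldual (d : ℕ) (a b c : ℂ) : Matrix (Fin 4) (Fin 8) ℂ :=
  !![(d : ℂ) * a, b, 0, 0, (d : ℂ), 0, 0, 0;
     b, c / (d : ℂ), 0, 0, 0, 1, 0, 0;
     0, 0, a, b, 0, 0, 1, 0;
     0, 0, b, c, 0, 0, 0, (d : ℂ)]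

set_option maxHeartbeats 4000000

/-- Generalisation of Lemma 5.4 to type `(1,d)` when `−1` is not a square mod `d`:
no positive definite Hermitian matrix carries the column lattice of `L_A` onto the
column lattice of `L_dual`. -/
theorem no_principal_polarisation_type_d (d : ℕ) (hd : 2 ≤ d)
    (hsq : ¬ ∃ x : ZMod d, x ^ 2 = -1)
    (a b c : ℂ) (hind : AlgebraicIndependent ℚ ![a, b, c]) :
    ¬ ∃ H : Matrix (Fin 4) (Fin 4) ℂ, H.IsHermitian ∧ H.PosDef ∧
      colLattice (H * LA d a b c) = colLattice (Ldual d a b c) := by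
  rintro ⟨H, hherm, hpos, heq⟩
  have hd0 : (d:ℂ) ≠ 0 := Nat.cast_ne_zero.mpr (by omega)
  have hdq : (d:ℚ) ≠ 0 := Nat.cast_ne_zero.mpr (by omega)
  have fwd : ∀ j, ∃ n : Fin 8 → ℤ, ∑ k, n k • (Ldual d a b c)ᵀ k = (H * LA d a b c)ᵀ j := by
    intro j
    apply (Submodule.mem_span_range_iff_exists_fun ℤ).mp
    have : (H * LA d a b c)ᵀ j ∈ colLattice (H * LA d a b c) :=
      Submodule.subset_span ⟨j, rfl⟩
    rw [heq] at this
    exact this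
  have bwd : ∀ j, ∃ n : Fin 8 → ℤ, ∑ k, n k • (H * LA d a b c)ᵀ k = (Ldual d a b c)ᵀ j := by
    intro j
    apply (Submodule.mem_span_range_iff_exists_fun ℤ).mp
    have : (Ldual d a b c)ᵀ j ∈ colLattice (Ldual d a b c) :=
      Submodule.subset_span ⟨j, rfl⟩
    rw [← heq] at this
    exact this
  obtain ⟨n, hn⟩ := fwd 4
  have hn0 := congrFun hn 0
  have hn1 := congrFun hn 1
  have hn2 := congrFun hn 2
  have hn3 := congrFun hn 3
  simp only [Finset.sum_apply, Pi.smul_apply, Matrix.transpose_apply, Matrix.mul_apply] at hn0 hn1 hn2 hn3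
  simp [LA, Ldual, Fin.sum_univ_eight, Fin.sum_univ_four, Matrix.vecHead, Matrix.vecTail] at hn0 hn1 hn2 hn3
  clear hn
  obtain ⟨m, hm⟩ := fwd 5
  have hm0 := congrFun hm 0
  have hm1 := congrFun hm 1
  have hm2 := congrFun hm 2
  have hm3 := congrFun hm 3
  simp only [Finset.sum_apply, Pi.smul_apply, Matrix.transpose_apply, Matrix.mul_apply] at hm0 hm1 hm2 hm3
  simp [LA, Ldual, Fin.sum_univ_eight, Fin.sum_univ_four, Matrix.vecHead, Matrix.vecTail] at hm0 hm1 hm2 hm3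
  clear hm
  obtain ⟨p, hp⟩ := fwd 0
  have hp0 := congrFun hp 0
  have hp1 := congrFun hp 1
  have hp2 := congrFun hp 2
  have hp3 := congrFun hp 3
  simp only [Finset.sum_apply, Pi.smul_apply, Matrix.transpose_apply, Matrix.mul_apply] at hp0 hp1 hp2 hp3
  simp [LA, Ldual, Fin.sum_univ_eight, Fin.sum_univ_four, Matrix.vecHead, Matrix.vecTail] at hp0 hp1 hp2 hp3
  clear hp
  obtain ⟨k, hk⟩ := fwd 6
  have hk0 := congrFun hk 0
  have hk1 := congrFun hk 1
  have hk2 := congrFun hk 2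
  have hk3 := congrFun hk 3
  simp only [Finset.sum_apply, Pi.smul_apply, Matrix.transpose_apply, Matrix.mul_apply] at hk0 hk1 hk2 hk3
  simp [LA, Ldual, Fin.sum_univ_eight, Fin.sum_univ_four, Matrix.vecHead, Matrix.vecTail] at hk0 hk1 hk2 hk3
  clear hk
  obtain ⟨l, hl⟩ := fwd 7
  have hl0 := congrFun hl 0
  have hl1 := congrFun hl 1
  have hl2 := congrFun hl 2
  have hl3 := congrFun hl 3
  simp only [Finset.sum_apply, Pi.smul_apply, Matrix.transpose_apply, Matrix.mul_apply] at hl0 hl1 hl2 hl3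
  simp [LA, Ldual, Fin.sum_univ_eight, Fin.sum_univ_four, Matrix.vecHead, Matrix.vecTail] at hl0 hl1 hl2 hl3
  clear hl
  obtain ⟨r, hr⟩ := fwd 2
  have hr0 := congrFun hr 0
  have hr1 := congrFun hr 1
  have hr2 := congrFun hr 2
  have hr3 := congrFun hr 3
  simp only [Finset.sum_apply, Pi.smul_apply, Matrix.transpose_apply, Matrix.mul_apply] at hr0 hr1 hr2 hr3
  simp [LA, Ldual, Fin.sum_univ_eight, Fin.sum_univ_four, Matrix.vecHead, Matrix.vecTail] at hr0 hr1 hr2 hr3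
  clear hr
  have E0 := mono_indep hind ![-(((d:ℚ)*(d:ℚ))*(p 4:ℚ)), ((d:ℚ)*(d:ℚ))*((n 4:ℚ) - (p 0:ℚ)), (d:ℚ)*((m 4:ℚ) - (p 1:ℚ)), 0, ((d:ℚ)*(d:ℚ))*(n 0:ℚ), (d:ℚ)*((n 1:ℚ) + (m 0:ℚ)), 0, (m 1:ℚ), 0, 0] (by
    simp only [Matrix.cons_val_zero, Matrix.cons_val_one, Matrix.head_cons, Matrix.cons_val_two, Matrix.tail_cons, Matrix.cons_val_three, Matrix.cons_val_four, Matrix.cons_val_five, Matrix.cons_val_six, Matrix.cons_val_seven, Matrix.cons_val_eight, Matrix.cons_val_nine, Matrix.vecHead, Matrix.vecTail, Function.comp_apply, Matrix.cons_val_succ]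
    push_cast
    linear_combination ((d:ℂ)*a)*hn0 + b*hm0 - (d:ℂ)*hp0)
  have E1 := mono_indep hind ![-((d:ℚ)*(p 5:ℚ)), (d:ℚ)*(n 5:ℚ), (m 5:ℚ) - (d:ℚ)*(p 0:ℚ), -((d:ℚ)*((p 1:ℚ)/(d:ℚ))), 0, (d:ℚ)*(n 0:ℚ), (d:ℚ)*((n 1:ℚ)/(d:ℚ)), (m 0:ℚ), (m 1:ℚ)/(d:ℚ), 0] (by
    simp only [Matrix.cons_val_zero, Matrix.cons_val_one, Matrix.head_cons, Matrix.cons_val_two, Matrix.tail_cons, Matrix.cons_val_three, Matrix.cons_val_four, Matrix.cons_val_five, Matrix.cons_val_six, Matrix.cons_val_seven, Matrix.cons_val_eight, Matrix.cons_val_nine, Matrix.vecHead, Matrix.vecTail, Function.comp_apply, Matrix.cons_val_succ]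
    push_cast
    linear_combination ((d:ℂ)*a)*hn1 + b*hm1 - (d:ℂ)*hp1)
  have E2 := mono_indep hind ![-((d:ℚ)*(p 6:ℚ)), (d:ℚ)*((n 6:ℚ) - (p 2:ℚ)), (m 6:ℚ) - (d:ℚ)*(p 3:ℚ), 0, (d:ℚ)*(n 2:ℚ), (d:ℚ)*(n 3:ℚ) + (m 2:ℚ), 0, (m 3:ℚ), 0, 0] (by
    simp only [Matrix.cons_val_zero, Matrix.cons_val_one, Matrix.head_cons, Matrix.cons_val_two, Matrix.tail_cons, Matrix.cons_val_three, Matrix.cons_val_four, Matrix.cons_val_five, Matrix.cons_val_six, Matrix.cons_val_seven, Matrix.cons_val_eight, Matrix.cons_val_nine, Matrix.vecHead, Matrix.vecTail, Function.comp_apply, Matrix.cons_val_succ]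
    push_cast
    linear_combination ((d:ℂ)*a)*hn2 + b*hm2 - (d:ℂ)*hp2)
  have E3 := mono_indep hind ![-(((d:ℚ)*(d:ℚ))*(p 7:ℚ)), ((d:ℚ)*(d:ℚ))*(n 7:ℚ), (d:ℚ)*((m 7:ℚ) - (p 2:ℚ)), -((d:ℚ)*(p 3:ℚ)), 0, (d:ℚ)*(n 2:ℚ), (d:ℚ)*(n 3:ℚ), (m 2:ℚ), (m 3:ℚ), 0] (by
    simp only [Matrix.cons_val_zero, Matrix.cons_val_one, Matrix.head_cons, Matrix.cons_val_two, Matrix.tail_cons, Matrix.cons_val_three, Matrix.cons_val_four, Matrix.cons_val_five, Matrix.cons_val_six, Matrix.cons_val_seven, Matrix.cons_val_eight, Matrix.cons_val_nine, Matrix.vecHead, Matrix.vecTail, Function.comp_apply, Matrix.cons_val_succ]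
    push_cast
    linear_combination ((d:ℂ)*a)*hn3 + b*hm3 - (d:ℂ)*hp3)
  have E4 := mono_indep hind ![-((d:ℚ)*(r 4:ℚ)), (d:ℚ)*((k 4:ℚ) - (r 0:ℚ)), (d:ℚ)*(l 4:ℚ) - (r 1:ℚ), 0, (d:ℚ)*(k 0:ℚ), (k 1:ℚ) + (d:ℚ)*(l 0:ℚ), 0, (l 1:ℚ), 0, 0] (by
    simp only [Matrix.cons_val_zero, Matrix.cons_val_one, Matrix.head_cons, Matrix.cons_val_two, Matrix.tail_cons, Matrix.cons_val_three, Matrix.cons_val_four, Matrix.cons_val_five, Matrix.cons_val_six, Matrix.cons_val_seven, Matrix.cons_val_eight, Matrix.cons_val_nine, Matrix.vecHead, Matrix.vecTail, Function.comp_apply, Matrix.cons_val_succ]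
    push_cast
    linear_combination a*hk0 + b*hl0 - hr0)
  have E5 := mono_indep hind ![-(r 5:ℚ), (k 5:ℚ), (l 5:ℚ) - (r 0:ℚ), -((r 1:ℚ)/(d:ℚ)), 0, (k 0:ℚ), (k 1:ℚ)/(d:ℚ), (l 0:ℚ), (l 1:ℚ)/(d:ℚ), 0] (by
    simp only [Matrix.cons_val_zero, Matrix.cons_val_one, Matrix.head_cons, Matrix.cons_val_two, Matrix.tail_cons, Matrix.cons_val_three, Matrix.cons_val_four, Matrix.cons_val_five, Matrix.cons_val_six, Matrix.cons_val_seven, Matrix.cons_val_eight, Matrix.cons_val_nine, Matrix.vecHead, Matrix.vecTail, Function.comp_apply, Matrix.cons_val_succ]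
    push_cast
    linear_combination a*hk1 + b*hl1 - hr1)
  have E6 := mono_indep hind ![-(r 6:ℚ), (k 6:ℚ) - (r 2:ℚ), (l 6:ℚ) - (r 3:ℚ), 0, (k 2:ℚ), (k 3:ℚ) + (l 2:ℚ), 0, (l 3:ℚ), 0, 0] (by
    simp only [Matrix.cons_val_zero, Matrix.cons_val_one, Matrix.head_cons, Matrix.cons_val_two, Matrix.tail_cons, Matrix.cons_val_three, Matrix.cons_val_four, Matrix.cons_val_five, Matrix.cons_val_six, Matrix.cons_val_seven, Matrix.cons_val_eight, Matrix.cons_val_nine, Matrix.vecHead, Matrix.vecTail, Function.comp_apply, Matrix.cons_val_succ]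
    push_cast
    linear_combination a*hk2 + b*hl2 - hr2)
  have E7 := mono_indep hind ![-((d:ℚ)*(r 7:ℚ)), (d:ℚ)*(k 7:ℚ), (d:ℚ)*(l 7:ℚ) - (r 2:ℚ), -(r 3:ℚ), 0, (k 2:ℚ), (k 3:ℚ), (l 2:ℚ), (l 3:ℚ), 0] (by
    simp only [Matrix.cons_val_zero, Matrix.cons_val_one, Matrix.head_cons, Matrix.cons_val_two, Matrix.tail_cons, Matrix.cons_val_three, Matrix.cons_val_four, Matrix.cons_val_five, Matrix.cons_val_six, Matrix.cons_val_seven, Matrix.cons_val_eight, Matrix.cons_val_nine, Matrix.vecHead, Matrix.vecTail, Function.comp_apply, Matrix.cons_val_succ]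
    push_cast
    linear_combination a*hk3 + b*hl3 - hr3)

  -- rational coefficient facts
  have hdd : ((d:ℚ)*(d:ℚ)) ≠ 0 := mul_ne_zero hdq hdq
  have fn0q : (n 0:ℚ) = 0 := by
    have t : ((d:ℚ)*(d:ℚ))*(n 0:ℚ) = 0 := E0 4
    exact (mul_eq_zero.mp t).resolve_left hdd
  have fm1q : (m 1:ℚ) = 0 := E0 7
  have fp0q : (n 4:ℚ) = (p 0:ℚ) := by
    have t : ((d:ℚ)*(d:ℚ))*((n 4:ℚ) - (p 0:ℚ)) = 0 := E0 1
    have := (mul_eq_zero.mp t).resolve_left hdd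
    linarith
  have fm4q' : (m 4:ℚ) = (p 1:ℚ) := by
    have t : (d:ℚ)*((m 4:ℚ) - (p 1:ℚ)) = 0 := E0 2
    have := (mul_eq_zero.mp t).resolve_left hdq
    linarith
  have fn1q : (n 1:ℚ) = 0 := by
    have t : (d:ℚ)*((n 1:ℚ)/(d:ℚ)) = 0 := E1 6
    have t2 := (mul_eq_zero.mp t).resolve_left hdq
    exact (div_eq_zero_iff.mp t2).resolve_right hdq
  have fm0q : (m 0:ℚ) = 0 := E1 7
  have fn5q : (n 5:ℚ) = 0 := by
    have t : (d:ℚ)*(n 5:ℚ) = 0 := E1 1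
    exact (mul_eq_zero.mp t).resolve_left hdq
  have fm5q : (m 5:ℚ) = (d:ℚ)*(n 4:ℚ) := by
    have t : (m 5:ℚ) - (d:ℚ)*(p 0:ℚ) = 0 := E1 2
    linear_combination t - (d:ℚ)*fp0q
  have fp1q : (p 1:ℚ) = 0 := by
    have t : -((d:ℚ)*((p 1:ℚ)/(d:ℚ))) = 0 := E1 3
    have t2 : (d:ℚ)*((p 1:ℚ)/(d:ℚ)) = 0 := by linarith
    have t3 := (mul_eq_zero.mp t2).resolve_left hdq
    exact (div_eq_zero_iff.mp t3).resolve_right hdq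
  have fm4q : (m 4:ℚ) = 0 := by linarith
  have fn2q : (n 2:ℚ) = 0 := by
    have t : (d:ℚ)*(n 2:ℚ) = 0 := E2 4
    exact (mul_eq_zero.mp t).resolve_left hdq
  have f32q : (d:ℚ)*(n 3:ℚ) + (m 2:ℚ) = 0 := E2 5
  have fm3q : (m 3:ℚ) = 0 := E2 7
  have fp2q : (n 6:ℚ) = (p 2:ℚ) := by
    have t : (d:ℚ)*((n 6:ℚ) - (p 2:ℚ)) = 0 := E2 1
    have := (mul_eq_zero.mp t).resolve_left hdq
    linarith
  have fm6q' : (m 6:ℚ) - (d:ℚ)*(p 3:ℚ) = 0 := E2 2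
  have fn3q : (n 3:ℚ) = 0 := by
    have t : (d:ℚ)*(n 3:ℚ) = 0 := E3 6
    exact (mul_eq_zero.mp t).resolve_left hdq
  have fm2q : (m 2:ℚ) = 0 := by linear_combination f32q - (d:ℚ)*fn3q
  have fn7q : (n 7:ℚ) = 0 := by
    have t : ((d:ℚ)*(d:ℚ))*(n 7:ℚ) = 0 := E3 1
    exact (mul_eq_zero.mp t).resolve_left hdd
  have fm7q : (m 7:ℚ) = (n 6:ℚ) := by
    have t : (d:ℚ)*((m 7:ℚ) - (p 2:ℚ)) = 0 := E3 2
    have := (mul_eq_zero.mp t).resolve_left hdq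
    linarith
  have fp3q : (p 3:ℚ) = 0 := by
    have t : -((d:ℚ)*(p 3:ℚ)) = 0 := E3 3
    have t2 : (d:ℚ)*(p 3:ℚ) = 0 := by linarith
    exact (mul_eq_zero.mp t2).resolve_left hdq
  have fm6q : (m 6:ℚ) = 0 := by linear_combination fm6q' + (d:ℚ)*fp3q
  have fk0q : (k 0:ℚ) = 0 := by
    have t : (d:ℚ)*(k 0:ℚ) = 0 := E4 4
    exact (mul_eq_zero.mp t).resolve_left hdq
  have f45q : (k 1:ℚ) + (d:ℚ)*(l 0:ℚ) = 0 := E4 5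
  have fl1q : (l 1:ℚ) = 0 := E4 7
  have fr0q : (k 4:ℚ) = (r 0:ℚ) := by
    have t : (d:ℚ)*((k 4:ℚ) - (r 0:ℚ)) = 0 := E4 1
    have := (mul_eq_zero.mp t).resolve_left hdq
    linarith
  have f42q : (d:ℚ)*(l 4:ℚ) - (r 1:ℚ) = 0 := E4 2
  have fk1q : (k 1:ℚ) = 0 := by
    have t : (k 1:ℚ)/(d:ℚ) = 0 := E5 6
    exact (div_eq_zero_iff.mp t).resolve_right hdq
  have fl0q : (l 0:ℚ) = 0 := by
    have t : (d:ℚ)*(l 0:ℚ) = 0 := by linarith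
    exact (mul_eq_zero.mp t).resolve_left hdq
  have fk5q : (k 5:ℚ) = 0 := E5 1
  have fl5q : (l 5:ℚ) = (k 4:ℚ) := by
    have t : (l 5:ℚ) - (r 0:ℚ) = 0 := E5 2
    linarith
  have fr1q : (r 1:ℚ) = 0 := by
    have t : -((r 1:ℚ)/(d:ℚ)) = 0 := E5 3
    have t2 : (r 1:ℚ)/(d:ℚ) = 0 := by linarith
    exact (div_eq_zero_iff.mp t2).resolve_right hdq
  have fl4q : (l 4:ℚ) = 0 := by
    have t : (d:ℚ)*(l 4:ℚ) = 0 := by linarith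
    exact (mul_eq_zero.mp t).resolve_left hdq
  have fk2q : (k 2:ℚ) = 0 := E6 4
  have f65q : (k 3:ℚ) + (l 2:ℚ) = 0 := E6 5
  have fl3q : (l 3:ℚ) = 0 := E6 7
  have fr2q : (k 6:ℚ) = (r 2:ℚ) := by
    have t : (k 6:ℚ) - (r 2:ℚ) = 0 := E6 1
    linarith
  have f62q : (l 6:ℚ) - (r 3:ℚ) = 0 := E6 2
  have fk3q : (k 3:ℚ) = 0 := E7 6
  have fl2q : (l 2:ℚ) = 0 := by linarith
  have fk7q : (k 7:ℚ) = 0 := by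
    have t : (d:ℚ)*(k 7:ℚ) = 0 := E7 1
    exact (mul_eq_zero.mp t).resolve_left hdq
  have fk6q : (k 6:ℚ) = (d:ℚ)*(l 7:ℚ) := by
    have t : (d:ℚ)*(l 7:ℚ) - (r 2:ℚ) = 0 := E7 2
    linarith
  have fr3q : (r 3:ℚ) = 0 := by
    have t : -(r 3:ℚ) = 0 := E7 3
    linarith
  have fl6q : (l 6:ℚ) = 0 := by linarith

  have fn0c : (n 0:ℂ) = 0 := by exact_mod_cast fn0q
  have fn1c : (n 1:ℂ) = 0 := by exact_mod_cast fn1q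
  have fn2c : (n 2:ℂ) = 0 := by exact_mod_cast fn2q
  have fn3c : (n 3:ℂ) = 0 := by exact_mod_cast fn3q
  have fn5c : (n 5:ℂ) = 0 := by exact_mod_cast fn5q
  have fn7c : (n 7:ℂ) = 0 := by exact_mod_cast fn7q
  have fm0c : (m 0:ℂ) = 0 := by exact_mod_cast fm0q
  have fm1c : (m 1:ℂ) = 0 := by exact_mod_cast fm1q
  have fm2c : (m 2:ℂ) = 0 := by exact_mod_cast fm2q
  have fm3c : (m 3:ℂ) = 0 := by exact_mod_cast fm3q
  have fm4c : (m 4:ℂ) = 0 := by exact_mod_cast fm4q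
  have fm6c : (m 6:ℂ) = 0 := by exact_mod_cast fm6q
  have fk0c : (k 0:ℂ) = 0 := by exact_mod_cast fk0q
  have fk1c : (k 1:ℂ) = 0 := by exact_mod_cast fk1q
  have fk2c : (k 2:ℂ) = 0 := by exact_mod_cast fk2q
  have fk3c : (k 3:ℂ) = 0 := by exact_mod_cast fk3q
  have fk5c : (k 5:ℂ) = 0 := by exact_mod_cast fk5q
  have fk7c : (k 7:ℂ) = 0 := by exact_mod_cast fk7q
  have fl0c : (l 0:ℂ) = 0 := by exact_mod_cast fl0q
  have fl1c : (l 1:ℂ) = 0 := by exact_mod_cast fl1q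
  have fl2c : (l 2:ℂ) = 0 := by exact_mod_cast fl2q
  have fl3c : (l 3:ℂ) = 0 := by exact_mod_cast fl3q
  have fl4c : (l 4:ℂ) = 0 := by exact_mod_cast fl4q
  have fl6c : (l 6:ℂ) = 0 := by exact_mod_cast fl6q
  have fm5c : (m 5:ℂ) = (d:ℂ)*(n 4:ℂ) := by exact_mod_cast fm5q
  have fm7c : (m 7:ℂ) = (n 6:ℂ) := by exact_mod_cast fm7q
  have fk6c : (k 6:ℂ) = (d:ℂ)*(l 7:ℂ) := by exact_mod_cast fk6q
  have fl5c : (l 5:ℂ) = (k 4:ℂ) := by exact_mod_cast fl5q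

  -- the entries of H
  have hH00 : H 0 0 = (d:ℂ)*(n 4:ℂ) := by linear_combination -hn0 + ((d:ℂ)*a)*fn0c + b*fn1c
  have hH10 : H 1 0 = 0 := by linear_combination -hn1 + b*fn0c + (c/(d:ℂ))*fn1c + fn5c
  have hH20 : H 2 0 = (n 6:ℂ) := by linear_combination -hn2 + a*fn2c + b*fn3c
  have hH30 : H 3 0 = 0 := by linear_combination -hn3 + b*fn2c + c*fn3c + (d:ℂ)*fn7c
  have hH01 : H 0 1 = 0 := by
    have t : H 0 1 * (d:ℂ) = 0 := by
      linear_combination -hm0 + ((d:ℂ)*a)*fm0c + b*fm1c + (d:ℂ)*fm4c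
    exact (mul_eq_zero.mp t).resolve_right hd0
  have hH11 : H 1 1 = (n 4:ℂ) := by
    have t : H 1 1 * (d:ℂ) = (n 4:ℂ) * (d:ℂ) := by
      linear_combination -hm1 + b*fm0c + (c/(d:ℂ))*fm1c + fm5c
    exact mul_right_cancel₀ hd0 t
  have hH21 : H 2 1 = 0 := by
    have t : H 2 1 * (d:ℂ) = 0 := by
      linear_combination -hm2 + a*fm2c + b*fm3c + fm6c
    exact (mul_eq_zero.mp t).resolve_right hd0
  have hH31 : H 3 1 = (n 6:ℂ) := by
    have t : H 3 1 * (d:ℂ) = (n 6:ℂ) * (d:ℂ) := by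
      linear_combination -hm3 + b*fm2c + c*fm3c + (d:ℂ)*fm7c
    exact mul_right_cancel₀ hd0 t
  have hH02 : H 0 2 = (k 4:ℂ) := by
    have t : H 0 2 * (d:ℂ) = (k 4:ℂ) * (d:ℂ) := by
      linear_combination -hk0 + ((d:ℂ)*a)*fk0c + b*fk1c
    exact mul_right_cancel₀ hd0 t
  have hH12 : H 1 2 = 0 := by
    have t : H 1 2 * (d:ℂ) = 0 := by
      linear_combination -hk1 + b*fk0c + (c/(d:ℂ))*fk1c + fk5c
    exact (mul_eq_zero.mp t).resolve_right hd0
  have hH22 : H 2 2 = (l 7:ℂ) := by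
    have t : H 2 2 * (d:ℂ) = (l 7:ℂ) * (d:ℂ) := by
      linear_combination -hk2 + a*fk2c + b*fk3c + fk6c
    exact mul_right_cancel₀ hd0 t
  have hH32 : H 3 2 = 0 := by
    have t : H 3 2 * (d:ℂ) = 0 := by
      linear_combination -hk3 + b*fk2c + c*fk3c + (d:ℂ)*fk7c
    exact (mul_eq_zero.mp t).resolve_right hd0
  have hH03 : H 0 3 = 0 := by linear_combination -hl0 + ((d:ℂ)*a)*fl0c + b*fl1c + (d:ℂ)*fl4c
  have hH13 : H 1 3 = (k 4:ℂ) := by linear_combination -hl1 + b*fl0c + (c/(d:ℂ))*fl1c + fl5c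
  have hH23 : H 2 3 = 0 := by linear_combination -hl2 + a*fl2c + b*fl3c + fl6c
  have hH33 : H 3 3 = (d:ℂ)*(l 7:ℂ) := by linear_combination -hl3 + b*fl2c + c*fl3c
  -- Hermitian gives n 6 = k 4
  have hzy : n 6 = k 4 := by
    have t := congrFun (congrFun hherm 0) 2
    rw [Matrix.conjTranspose_apply, hH20, hH02] at t
    rw [star_intCast] at t
    exact_mod_cast t
  -- positivity of x = n 4
  have hv1ne : (![0,1,0,0] : Fin 4 → ℂ) ≠ 0 := by
    intro hcon
    simpa using congrFun hcon 1
  have hx1 := hpos.dotProduct_mulVec_pos (x := ![0,1,0,0]) hv1ne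
  have hval1 : star (![0,1,0,0] : Fin 4 → ℂ) ⬝ᵥ H *ᵥ ![0,1,0,0] = ((n 4:ℤ):ℂ) := by
    simp [dotProduct, Matrix.mulVec, Fin.sum_univ_four]
    rw [hH11]
  rw [hval1] at hx1
  have hx_pos : 0 < n 4 := by
    rw [show ((n 4:ℤ):ℂ) = (((n 4:ℤ):ℝ):ℂ) by push_cast; ring, Complex.zero_lt_real] at hx1
    exact_mod_cast hx1

  obtain ⟨u, hu⟩ := bwd 5
  have hu0 := congrFun hu 0
  have hu1 := congrFun hu 1
  have hu2 := congrFun hu 2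
  have hu3 := congrFun hu 3
  simp only [Finset.sum_apply, Pi.smul_apply, Matrix.transpose_apply, Matrix.mul_apply] at hu0 hu1 hu2 hu3
  simp [LA, Ldual, Fin.sum_univ_eight, Fin.sum_univ_four, Matrix.vecHead, Matrix.vecTail] at hu0 hu1 hu2 hu3
  clear hu
  obtain ⟨v, hv⟩ := bwd 6
  have hv0 := congrFun hv 0
  have hv1 := congrFun hv 1
  have hv2 := congrFun hv 2
  have hv3 := congrFun hv 3
  simp only [Finset.sum_apply, Pi.smul_apply, Matrix.transpose_apply, Matrix.mul_apply] at hv0 hv1 hv2 hv3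
  simp [LA, Ldual, Fin.sum_univ_eight, Fin.sum_univ_four, Matrix.vecHead, Matrix.vecTail] at hv0 hv1 hv2 hv3
  clear hv

  rw [hH10, hH11, hH12, hH13] at hu1
  rw [hH30, hH31, hH32, hH33] at hu3
  rw [hH00, hH01, hH02, hH03] at hv0
  rw [hH20, hH21, hH22, hH23] at hv2

  have W1 := mono_indep hind ![(d:ℚ)*(n 4:ℚ)*(u 5:ℚ) + (k 4:ℚ)*(u 7:ℚ) - 1, 0, (n 4:ℚ)*(u 0:ℚ) + (k 4:ℚ)*(u 2:ℚ), (n 4:ℚ)*(u 1:ℚ) + (k 4:ℚ)*(u 3:ℚ)/(d:ℚ), 0, 0, 0, 0, 0, 0] (by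
    simp only [Matrix.cons_val_zero, Matrix.cons_val_one, Matrix.head_cons, Matrix.cons_val_two, Matrix.tail_cons, Matrix.cons_val_three, Matrix.cons_val_four, Matrix.cons_val_five, Matrix.cons_val_six, Matrix.cons_val_seven, Matrix.cons_val_eight, Matrix.cons_val_nine, Matrix.vecHead, Matrix.vecTail, Function.comp_apply, Matrix.cons_val_succ]
    push_cast
    linear_combination hu1)
  have W3 := mono_indep hind ![(d:ℚ)*((n 6:ℚ)*(u 5:ℚ) + (l 7:ℚ)*(u 7:ℚ)), 0, (n 6:ℚ)*(u 0:ℚ) + (d:ℚ)*(l 7:ℚ)*(u 2:ℚ), (n 6:ℚ)*(u 1:ℚ) + (d:ℚ)*(l 7:ℚ)*(u 3:ℚ)/(d:ℚ), 0, 0, 0, 0, 0, 0] (by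
    simp only [Matrix.cons_val_zero, Matrix.cons_val_one, Matrix.head_cons, Matrix.cons_val_two, Matrix.tail_cons, Matrix.cons_val_three, Matrix.cons_val_four, Matrix.cons_val_five, Matrix.cons_val_six, Matrix.cons_val_seven, Matrix.cons_val_eight, Matrix.cons_val_nine, Matrix.vecHead, Matrix.vecTail, Function.comp_apply, Matrix.cons_val_succ]
    push_cast
    linear_combination hu3)
  have W4 := mono_indep hind ![(d:ℚ)*((n 4:ℚ)*(v 4:ℚ) + (k 4:ℚ)*(v 6:ℚ)), (d:ℚ)*((n 4:ℚ)*(v 0:ℚ) + (k 4:ℚ)*(v 2:ℚ)), (d:ℚ)*(n 4:ℚ)*(v 1:ℚ) + (k 4:ℚ)*(v 3:ℚ), 0, 0, 0, 0, 0, 0, 0] (by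
    simp only [Matrix.cons_val_zero, Matrix.cons_val_one, Matrix.head_cons, Matrix.cons_val_two, Matrix.tail_cons, Matrix.cons_val_three, Matrix.cons_val_four, Matrix.cons_val_five, Matrix.cons_val_six, Matrix.cons_val_seven, Matrix.cons_val_eight, Matrix.cons_val_nine, Matrix.vecHead, Matrix.vecTail, Function.comp_apply, Matrix.cons_val_succ]
    push_cast
    linear_combination hv0)
  have W5 := mono_indep hind ![(n 6:ℚ)*(v 4:ℚ) + (d:ℚ)*(l 7:ℚ)*(v 6:ℚ) - 1, (n 6:ℚ)*(v 0:ℚ) + (d:ℚ)*(l 7:ℚ)*(v 2:ℚ), (n 6:ℚ)*(v 1:ℚ) + (l 7:ℚ)*(v 3:ℚ), 0, 0, 0, 0, 0, 0, 0] (by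
    simp only [Matrix.cons_val_zero, Matrix.cons_val_one, Matrix.head_cons, Matrix.cons_val_two, Matrix.tail_cons, Matrix.cons_val_three, Matrix.cons_val_four, Matrix.cons_val_five, Matrix.cons_val_six, Matrix.cons_val_seven, Matrix.cons_val_eight, Matrix.cons_val_nine, Matrix.vecHead, Matrix.vecTail, Function.comp_apply, Matrix.cons_val_succ]
    push_cast
    linear_combination hv2)

  -- the four integer relations
  have hA1 : (d:ℤ)*(n 4)*(u 5) + (k 4)*(u 7) = 1 := by
    have t : (d:ℚ)*(n 4:ℚ)*(u 5:ℚ) + (k 4:ℚ)*(u 7:ℚ) - 1 = 0 := W1 0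
    have t2 : (d:ℚ)*(n 4:ℚ)*(u 5:ℚ) + (k 4:ℚ)*(u 7:ℚ) = 1 := by linarith
    exact_mod_cast t2
  have hA2 : (n 6)*(u 5) + (l 7)*(u 7) = 0 := by
    have t : (d:ℚ)*((n 6:ℚ)*(u 5:ℚ) + (l 7:ℚ)*(u 7:ℚ)) = 0 := W3 0
    have t2 := (mul_eq_zero.mp t).resolve_left hdq
    exact_mod_cast t2
  have hB1 : (n 4)*(v 4) + (k 4)*(v 6) = 0 := by
    have t : (d:ℚ)*((n 4:ℚ)*(v 4:ℚ) + (k 4:ℚ)*(v 6:ℚ)) = 0 := W4 0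
    have t2 := (mul_eq_zero.mp t).resolve_left hdq
    exact_mod_cast t2
  have hB2 : (n 6)*(v 4) + (d:ℤ)*(l 7)*(v 6) = 1 := by
    have t : (n 6:ℚ)*(v 4:ℚ) + (d:ℚ)*(l 7:ℚ)*(v 6:ℚ) - 1 = 0 := W5 0
    have t2 : (n 6:ℚ)*(v 4:ℚ) + (d:ℚ)*(l 7:ℚ)*(v 6:ℚ) = 1 := by linarith
    exact_mod_cast t2
  -- positivity of x * e
  have hv2ne : (![0, -(k 4:ℂ), 0, (n 4:ℂ)] : Fin 4 → ℂ) ≠ 0 := by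
    intro hcon
    have t := congrFun hcon 3
    simp at t
    omega
  have hx2 := hpos.dotProduct_mulVec_pos (x := ![0, -(k 4:ℂ), 0, (n 4:ℂ)]) hv2ne
  have hval2 : star (![0, -(k 4:ℂ), 0, (n 4:ℂ)] : Fin 4 → ℂ) ⬝ᵥ H *ᵥ ![0, -(k 4:ℂ), 0, (n 4:ℂ)]
      = (((n 4) * ((d:ℤ)*(n 4)*(l 7) - (k 4)*(n 6)) : ℤ):ℂ) := by
    simp [dotProduct, Matrix.mulVec, Fin.sum_univ_four]
    rw [hH11, hH13, hH31, hH33]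
    push_cast
    ring
  rw [hval2] at hx2
  have hxe_pos : 0 < (n 4) * ((d:ℤ)*(n 4)*(l 7) - (k 4)*(k 4)) := by
    rw [show (((n 4) * ((d:ℤ)*(n 4)*(l 7) - (k 4)*(n 6)) : ℤ):ℂ)
        = ((((n 4) * ((d:ℤ)*(n 4)*(l 7) - (k 4)*(n 6)) : ℤ):ℝ):ℂ) by push_cast; ring,
      Complex.zero_lt_real] at hx2
    have : 0 < (n 4) * ((d:ℤ)*(n 4)*(l 7) - (k 4)*(n 6)) := by exact_mod_cast hx2
    rw [hzy] at this
    exact this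
  have hE_pos : 0 < (d:ℤ)*(n 4)*(l 7) - (k 4)*(k 4) := by nlinarith [hx_pos, hxe_pos]
  -- divisibility relations
  have hA2' : (k 4)*(u 5) + (l 7)*(u 7) = 0 := by linear_combination hA2 - (u 5)*hzy
  have hB2' : (k 4)*(v 4) + (d:ℤ)*(l 7)*(v 6) = 1 := by linear_combination hB2 - (v 4)*hzy
  have hw : (l 7) = ((d:ℤ)*(n 4)*(l 7) - (k 4)*(k 4)) * (u 5) := by
    linear_combination (k 4)*hA2' - (l 7)*hA1
  have hy : (k 4) = -(((d:ℤ)*(n 4)*(l 7) - (k 4)*(k 4)) * (u 7)) := by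
    linear_combination (d:ℤ)*(n 4)*hA2' - (k 4)*hA1
  have hxx : (n 4) = ((d:ℤ)*(n 4)*(l 7) - (k 4)*(k 4)) * (v 6) := by
    linear_combination (k 4)*hB1 - (n 4)*hB2'
  have he2 : (d:ℤ)*(n 4)*(l 7) - (k 4)*(k 4)
      = ((d:ℤ)*(n 4)*(l 7) - (k 4)*(k 4)) * ((d:ℤ)*(n 4)*(l 7) - (k 4)*(k 4))
        * ((d:ℤ)*(u 5)*(v 6) - (u 7)*(u 7)) := by
    linear_combination (d:ℤ)*(n 4)*hw + (d:ℤ)*((d:ℤ)*(n 4)*(l 7) - (k 4)*(k 4))*(u 5)*hxx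
      + (((d:ℤ)*(n 4)*(l 7) - (k 4)*(k 4))*(u 7) - (k 4))*hy
  have ht_pos : 0 < (d:ℤ)*(u 5)*(v 6) - (u 7)*(u 7) := by
    nlinarith [he2, hE_pos, mul_pos hE_pos hE_pos]
  have hE1 : (d:ℤ)*(n 4)*(l 7) - (k 4)*(k 4) = 1 := by
    nlinarith [he2, hE_pos, ht_pos]
  -- contradiction with hsq
  refine hsq ⟨((k 4 : ℤ) : ZMod d), ?_⟩
  have key : ((k 4)^2 : ℤ) = (d:ℤ)*((n 4)*(l 7)) - 1 := by linear_combination -hE1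
  calc ((k 4 : ℤ) : ZMod d)^2 = (((k 4)^2 : ℤ) : ZMod d) := by push_cast; ring
    _ = (((d:ℤ)*((n 4)*(l 7)) - 1 : ℤ) : ZMod d) := by rw [key]
    _ = -1 := by push_cast [ZMod.natCast_self]; ring
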